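/- Let M be a commutative idempotent monoid acting additively on an abelian group G, F : M → G a function satisfying the chain rule, X_1, …, X_n ∈ M, and G = (V, E) a graph with vertex set V = [n]. Then the following are equivalent: (1) X_1, …, X_n form an F-Markov random field with respect to G; (2) X_{[n]∖W}.F(;_{w∈W} X_w) = 0 for every nonempty W ⊆ [n] such that the atom p_W is disconnected with respect to G. -/

import Mathlib

/-!
By the chain rule and the recursion defining the higher-order terms, every term
`X_C.F(X_A; X_B)` with `A, B, C` pairwise disjoint is the sum of the atom values
`X_{[n]∖W}.F(;_{w∈W} X_w)` over the sets `W` that meet `A` and `B` and avoid `C`. If `C`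
separates `A` from `B`, every such `W` is disconnected, so the atom values vanishing makes the
family an `F`-Markov random field. Conversely, for a disconnected `W` let `A` be one component
of `W` in `G − ([n]∖W)`, `B = W ∖ A` and `C = [n] ∖ W`: the vanishing term `X_C.F(X_A; X_B)`
expands into the atom value of `W` plus those of proper subsets of `W` that are again
disconnected, so strong induction on `W` shows that the atom value of `W` vanishes.
-/

namespace AMRF
/-- An additive monoid action of a commutative monoid `M` on an abelian group `G`. -/
structure MAction (M G : Type*) [CommMonoid M] [AddCommGroup G] where
  act : M → G → G
  act_one : ∀ g, act 1 g = g
  act_mul : ∀ X Y g, act X (act Y g) = act (X * Y) g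
  act_add : ∀ X g h, act X (g + h) = act X g + act X h

variable {M G : Type*} [CommMonoid M] [AddCommGroup G]

/-- `F : M → G` satisfies the chain rule `F(XY) = F(X) + X.F(Y)`. -/
def ChainRule (A : MAction M G) (F : M → G) : Prop :=
  ∀ X Y : M, F (X * Y) = F X + A.act X (F Y)

/-- Higher-order terms on a *reversed* argument list: the head of the list is the *last*
argument `Y_q` in `F_q(Y₁; …; Y_q)`. -/
def Fseq (A : MAction M G) (F : M → G) : List M → G
  | [] => 0
  | [Y] => F Y
  | Y :: Z :: l => Fseq A F (Z :: l) - A.act Y (Fseq A F (Z :: l))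

/-- `Fof A F [Y₁, …, Y_q] = F_q(Y₁; …; Y_q)`, defined inductively by
`F_q(Y₁; …; Y_q) = F_{q−1}(Y₁; …; Y_{q−1}) − Y_q.F_{q−1}(Y₁; …; Y_{q−1})`. -/
def Fof (A : MAction M G) (F : M → G) (l : List M) : G :=
  Fseq A F l.reverse

/-- The interaction term `F(;_{i∈I} X_i)`, with arguments in increasing index order. -/
def Fint (A : MAction M G) (F : M → G) {ι : Type*} [LinearOrder ι] (X : ι → M)
    (I : Finset ι) : G :=
  Fof A F ((I.sort (· ≤ ·)).map X)

/-- The `F`-independence relation: `X ⊥_F Y | Z` iff `Z.F(X; Y) = 0`, where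
`F(X; Y) = F(X) − Y.F(X)` is the second-order term. -/
def Findep (A : MAction M G) (F : M → G) (X Y Z : M) : Prop :=
  A.act Z (F X - A.act Y (F X)) = 0
/-- The graph `G − U`: keep only edges with both endpoints outside `U`. -/
def delGraph {V : Type*} (G : SimpleGraph V) (U : Finset V) : SimpleGraph V where
  Adj a b := G.Adj a b ∧ a ∉ U ∧ b ∉ U
  symm := ⟨fun _ _ h => ⟨h.1.symm, h.2.2, h.2.1⟩⟩
  loopless := ⟨fun a h => G.loopless.1 a h.1⟩

/-- `C` separates `A` from `B` in `G`: every walk from a vertex of `A` to a vertex of `B`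
passes through some vertex of `C`. -/
def Separates {V : Type*} (G : SimpleGraph V) (A B C : Finset V) : Prop :=
  ∀ a ∈ A, ∀ b ∈ B, ∀ w : G.Walk a b, ∃ c ∈ C, c ∈ w.support

/-- `U` is a cutset: `G − U` has more than one connected component. -/
def IsCutset {V : Type*} (G : SimpleGraph V) (U : Finset V) : Prop :=
  ∃ v w : V, v ∉ U ∧ w ∉ U ∧ ¬ (delGraph G U).Reachable v w

/-- `C` is (the vertex set of) a connected component of `G − U`. -/
def IsCompOf {V : Type*} (G : SimpleGraph V) (U C : Finset V) : Prop :=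
  ∃ v, v ∉ U ∧ ∀ w, w ∈ C ↔ (delGraph G U).Reachable v w

/-- The global Markov property: `X₁, …, X_n` form a Markov random field with respect to the
independence relation `ind` and the graph `Gr`. -/
def IsMRF {M : Type*} [CommMonoid M] {n : ℕ} (ind : M → M → M → Prop)
    (Gr : SimpleGraph (Fin n)) (X : Fin n → M) : Prop :=
  ∀ A B C : Finset (Fin n), Disjoint A B → Disjoint A C → Disjoint B C →
    Separates Gr A B C →
    ind (∏ a ∈ A, X a) (∏ b ∈ B, X b) (∏ c ∈ C, X c)

open Finset

namespace MAction

variable (A : MAction M G)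

def actHom (x : M) : G →+ G := AddMonoidHom.mk' (A.act x) (A.act_add x)

theorem act_zero (x : M) : A.act x 0 = 0 := map_zero (A.actHom x)

theorem act_sub (x : M) (g h : G) : A.act x (g - h) = A.act x g - A.act x h :=
  map_sub (A.actHom x) g h

theorem act_act_comm (x y : M) (g : G) : A.act x (A.act y g) = A.act y (A.act x g) := by
  rw [A.act_mul, A.act_mul, mul_comm]

end MAction

namespace ChainRule

variable {A : MAction M G} {F : M → G}

theorem map_one (hF : ChainRule A F) : F 1 = 0 := by
  simpa [A.act_one] using hF 1 1

theorem sub_act_comm (hF : ChainRule A F) (x y : M) :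
    F x - A.act y (F x) = F y - A.act x (F y) := by
  rw [sub_eq_sub_iff_add_eq_add, ← hF, ← hF, mul_comm]

end ChainRule

section HigherOrder

variable (A : MAction M G) (F : M → G)

theorem Fseq_cons (a : M) {l : List M} (hl : l ≠ []) :
    Fseq A F (a :: l) = Fseq A F l - A.act a (Fseq A F l) := by
  cases l with
  | nil => exact absurd rfl hl
  | cons b t => rfl

theorem Fseq_perm (hF : ChainRule A F) {l₁ l₂ : List M} (h : l₁.Perm l₂) :
    Fseq A F l₁ = Fseq A F l₂ := by
  induction h with
  | nil => rfl
  | @cons x l₁ l₂ h ih =>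
    rcases eq_or_ne l₁ [] with rfl | hn
    · rw [h.symm.eq_nil]
    · rw [Fseq_cons A F x hn, Fseq_cons A F x (by rintro rfl; exact hn h.eq_nil), ih]
  | swap x y l =>
    cases l with
    | nil => exact hF.sub_act_comm x y
    | cons z t =>
      have hzt : (z :: t : List M) ≠ [] := List.cons_ne_nil z t
      rw [Fseq_cons A F y (List.cons_ne_nil x _), Fseq_cons A F x (List.cons_ne_nil y _),
        Fseq_cons A F x hzt, Fseq_cons A F y hzt, A.act_sub, A.act_sub, A.act_act_comm y x]
      abel
  | trans _ _ ih₁ ih₂ => exact ih₁.trans ih₂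

theorem Fof_perm (hF : ChainRule A F) {l₁ l₂ : List M} (h : l₁.Perm l₂) :
    Fof A F l₁ = Fof A F l₂ :=
  Fseq_perm A F hF (l₁.reverse_perm.trans (h.trans l₂.reverse_perm.symm))

theorem Fof_concat (a : M) {l : List M} (hl : l ≠ []) :
    Fof A F (l ++ [a]) = Fof A F l - A.act a (Fof A F l) := by
  rw [Fof, List.reverse_append, List.reverse_singleton, List.singleton_append,
    Fseq_cons A F a (List.reverse_ne_nil_iff.mpr hl), Fof]

variable {ι : Type*} [LinearOrder ι] (X : ι → M)

theorem Fint_singleton (i : ι) : Fint A F X {i} = F (X i) := by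
  rw [Fint, Finset.sort_singleton]
  rfl

theorem Fint_insert (hF : ChainRule A F) {a : ι} {S : Finset ι} (ha : a ∉ S)
    (hS : S.Nonempty) :
    Fint A F X (insert a S) = Fint A F X S - A.act (X a) (Fint A F X S) := by
  have hsort : ((insert a S).sort (· ≤ ·)).Perm (a :: S.sort (· ≤ ·)) :=
    (Finset.sort_perm_toList _ _).trans
      ((Finset.toList_insert ha).trans ((Finset.sort_perm_toList _ _).symm.cons a))
  have hperm : (((insert a S).sort (· ≤ ·)).map X).Perm ((S.sort (· ≤ ·)).map X ++ [X a]) :=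
    (hsort.map X).trans (List.perm_append_singleton _ _).symm
  rw [Fint, Fof_perm A F hF hperm,
    Fof_concat A F _ (List.ne_nil_of_length_pos (by simpa using hS.card_pos))]
  rfl

end HigherOrder

section Expansion

variable {ι β : Type*} [Fintype ι] [DecidableEq ι] [AddCommMonoid β]

theorem eq_sum_of_split {φ : Finset ι → Finset ι → β}
    (hφ : ∀ V C r, V.Nonempty → r ∉ V → r ∉ C →
      φ V C = φ V (insert r C) + φ (insert r V) C)
    {V C : Finset ι} (hV : V.Nonempty) (hVC : Disjoint V C) :
    φ V C = ∑ W with V ⊆ W ∧ Disjoint W C, φ W (univ \ W) := by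
  induction hk : #(univ \ (V ∪ C)) generalizing V C with
  | zero =>
    have hcover : V ∪ C = univ :=
      univ_subset_iff.mp (sdiff_eq_empty_iff_subset.mp (card_eq_zero.mp hk))
    have hC : univ \ V = C := by rw [← hcover, union_sdiff_cancel_left hVC]
    have hfilter : ({W | V ⊆ W ∧ Disjoint W C} : Finset (Finset ι)) = {V} := by
      ext W
      rw [mem_filter, mem_singleton, ← hC, ← compl_eq_univ_sdiff, disjoint_compl_right_iff]
      simp only [mem_univ, true_and, subset_antisymm_iff, and_comm]
    rw [hfilter, sum_singleton, hC]
  | succ k ih =>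
    obtain ⟨r, hr⟩ : (univ \ (V ∪ C)).Nonempty := card_pos.mp (hk ▸ k.succ_pos)
    have hcard : #(univ \ insert r (V ∪ C)) = k := by
      rw [sdiff_insert, card_erase_of_mem hr, hk, Nat.add_sub_cancel]
    simp only [mem_sdiff, mem_univ, true_and, mem_union, not_or] at hr
    rw [hφ V C r hV hr.1 hr.2,
      ih hV (disjoint_insert_right.mpr ⟨hr.1, hVC⟩) (by rw [union_insert, hcard]),
      ih (insert_nonempty r V) (disjoint_insert_left.mpr ⟨hr.2, hVC⟩)
        (by rw [insert_union, hcard])]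
    simp only [sum_filter, ← sum_add_distrib]
    refine sum_congr rfl fun W _ => ?_
    by_cases hrW : r ∈ W <;> simp [hrW, insert_subset_iff, disjoint_insert_right]

end Expansion

section Atoms

variable {ι : Type*} [Fintype ι] [LinearOrder ι] (A : MAction M G) (F : M → G) (X : ι → M)

def Fatom (W : Finset ι) : G :=
  A.act (∏ i ∈ univ \ W, X i) (Fint A F X W)

theorem act_prod_Fint_eq_sum_Fatom (hF : ChainRule A F) {V C : Finset ι} (hV : V.Nonempty)
    (hVC : Disjoint V C) :
    A.act (∏ i ∈ C, X i) (Fint A F X V)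
      = ∑ W with V ⊆ W ∧ Disjoint W C, Fatom A F X W := by
  refine eq_sum_of_split (φ := fun V C => A.act (∏ i ∈ C, X i) (Fint A F X V))
    (fun V C r hV hrV hrC => ?_) hV hVC
  rw [Fint_insert A F X hF hrV hV, A.act_sub, prod_insert hrC, A.act_mul, mul_comm]
  abel

theorem act_prod_F_prod_eq_sum_Fatom (hF : ChainRule A F) {S C : Finset ι}
    (hSC : Disjoint S C) :
    A.act (∏ i ∈ C, X i) (F (∏ i ∈ S, X i))
      = ∑ W with ¬Disjoint W S ∧ Disjoint W C, Fatom A F X W := by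
  induction S using Finset.induction_on generalizing C with
  | empty => simp [hF.map_one, A.act_zero]
  | insert a S haS ih =>
    rw [disjoint_insert_left] at hSC
    rw [prod_insert haS, hF, A.act_add, A.act_mul, mul_comm, ← prod_insert hSC.1,
      ← Fint_singleton A F X a,
      act_prod_Fint_eq_sum_Fatom A F X hF (singleton_nonempty a)
        (disjoint_singleton_left.mpr hSC.1),
      ih (disjoint_insert_right.mpr ⟨haS, hSC.2⟩)]
    simp only [sum_filter, ← sum_add_distrib]
    refine sum_congr rfl fun W _ => ?_
    by_cases haW : a ∈ W <;> simp [haW, disjoint_insert_right]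

theorem findep_prod_iff (hF : ChainRule A F) {S T C : Finset ι} (hST : Disjoint S T)
    (hSC : Disjoint S C) (hTC : Disjoint T C) :
    Findep A F (∏ i ∈ S, X i) (∏ i ∈ T, X i) (∏ i ∈ C, X i) ↔
      ∑ W with ¬Disjoint W S ∧ ¬Disjoint W T ∧ Disjoint W C, Fatom A F X W = 0 := by
  rw [Findep, A.act_sub, A.act_mul, mul_comm, ← prod_union hTC,
    act_prod_F_prod_eq_sum_Fatom A F X hF hSC,
    act_prod_F_prod_eq_sum_Fatom A F X hF (disjoint_union_right.mpr ⟨hST, hSC⟩)]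
  simp only [sum_filter, ← sum_sub_distrib]
  refine iff_of_eq (congrArg (· = 0) (sum_congr rfl fun W _ => ?_))
  by_cases hS : Disjoint W S <;> by_cases hT : Disjoint W T <;> by_cases hC : Disjoint W C <;>
    simp [hS, hT, hC, disjoint_union_right]

end Atoms

section Graph

variable {V : Type*} {Gr : SimpleGraph V}

theorem delGraph_le (U : Finset V) : delGraph Gr U ≤ Gr := fun _ _ h => h.1

theorem support_delGraph_walk {U : Finset V} {u v : V} (p : (delGraph Gr U).Walk u v)
    (hu : u ∉ U) : ∀ x ∈ p.support, x ∉ U := by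
  induction p with
  | nil => simpa using hu
  | cons h _ ih => simpa [hu] using ih h.2.2

theorem reachable_delGraph_iff {U : Finset V} {u v : V} (hu : u ∉ U) :
    (delGraph Gr U).Reachable u v ↔ ∃ p : Gr.Walk u v, ∀ x ∈ p.support, x ∉ U := by
  constructor
  · rintro ⟨p⟩
    refine ⟨p.mapLe (delGraph_le U), ?_⟩
    rw [SimpleGraph.Walk.support_mapLe_eq_support]
    exact support_delGraph_walk p hu
  · rintro ⟨p, hp⟩
    refine (p.transfer _ fun e he => ?_).reachable
    induction e using Sym2.ind with
    | h x y =>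
      exact ⟨p.adj_of_mem_edges he, hp x (p.fst_mem_support_of_mem_edges he),
        hp y (p.snd_mem_support_of_mem_edges he)⟩

variable [Fintype V] [DecidableEq V]

theorem disjoint_univ_sdiff_iff_subset {S W : Finset V} : Disjoint S (univ \ W) ↔ S ⊆ W := by
  rw [← compl_eq_univ_sdiff, disjoint_compl_right_iff]

theorem nonempty_of_isCutset_compl {W : Finset V} (h : IsCutset Gr (univ \ W)) : W.Nonempty :=
  let ⟨v, _, hv, _⟩ := h
  ⟨v, by simpa using hv⟩

theorem isCutset_compl_of_separates {S T C W : Finset V} (hsep : Separates Gr S T C)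
    (hS : ¬Disjoint W S) (hT : ¬Disjoint W T) (hC : Disjoint W C) :
    IsCutset Gr (univ \ W) := by
  obtain ⟨a, haW, haS⟩ := not_disjoint_iff.mp hS
  obtain ⟨b, hbW, hbT⟩ := not_disjoint_iff.mp hT
  refine ⟨a, b, by simpa using haW, by simpa using hbW, fun hab => ?_⟩
  obtain ⟨p, hp⟩ := (reachable_delGraph_iff (by simpa using haW)).mp hab
  obtain ⟨c, hcC, hcp⟩ := hsep a haS b hbT p
  exact hp c hcp (by simpa using disjoint_right.mp hC hcC)

theorem separates_filter_reachable (W : Finset V) (v : V)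
    [DecidablePred ((delGraph Gr (univ \ W)).Reachable v)] :
    Separates Gr ({x ∈ W | (delGraph Gr (univ \ W)).Reachable v x})
      (W \ {x ∈ W | (delGraph Gr (univ \ W)).Reachable v x}) (univ \ W) := by
  intro a ha b hb p
  by_contra! hp
  rw [mem_filter] at ha
  rw [mem_sdiff, mem_filter, not_and] at hb
  have hpW : ∀ x ∈ p.support, x ∉ univ \ W := fun x hx hxW => hp x hxW hx
  exact hb.2 hb.1 (ha.2.trans ((reachable_delGraph_iff (by simpa using ha.1)).mpr ⟨p, hpW⟩))

end Graph

section MarkovRandomField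

variable {n : ℕ} (A : MAction M G) (F : M → G) (X : Fin n → M) {Gr : SimpleGraph (Fin n)}

theorem isMRF_of_Fatom_eq_zero (hF : ChainRule A F)
    (h : ∀ W, IsCutset Gr (univ \ W) → Fatom A F X W = 0) : IsMRF (Findep A F) Gr X := by
  intro S T C hST hSC hTC hsep
  rw [findep_prod_iff A F X hF hST hSC hTC]
  refine sum_eq_zero fun W hW => ?_
  obtain ⟨hS, hT, hC⟩ := (mem_filter.mp hW).2
  exact h W (isCutset_compl_of_separates hsep hS hT hC)

theorem Fatom_eq_zero_of_isMRF (hF : ChainRule A F) (hmrf : IsMRF (Findep A F) Gr X)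
    (W : Finset (Fin n)) (hcut : IsCutset Gr (univ \ W)) : Fatom A F X W = 0 := by
  classical
  induction W using Finset.strongInduction with
  | H W ih =>
    obtain ⟨v, w, hv, hw, hvw⟩ := hcut
    simp only [mem_sdiff, mem_univ, true_and, not_not] at hv hw
    set K := {x ∈ W | (delGraph Gr (univ \ W)).Reachable v x}
    have hKC : Disjoint K (univ \ W) := disjoint_univ_sdiff_iff_subset.mpr (filter_subset _ W)
    have hKC' : Disjoint (W \ K) (univ \ W) := disjoint_univ_sdiff_iff_subset.mpr sdiff_subset
    have hsum := (findep_prod_iff A F X hF disjoint_sdiff hKC hKC').mp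
      (hmrf _ _ _ disjoint_sdiff hKC hKC' (separates_filter_reachable W v))
    rwa [sum_eq_single_of_mem W ?_ fun W' hW' hne => ?_] at hsum
    · refine mem_filter.mpr ⟨mem_univ W, not_disjoint_iff.mpr ⟨v, hv, ?_⟩,
        not_disjoint_iff.mpr ⟨w, hw, ?_⟩, disjoint_sdiff⟩
      · exact mem_filter.mpr ⟨hv, .refl v⟩
      · exact mem_sdiff.mpr ⟨hw, fun hwK => hvw (mem_filter.mp hwK).2⟩
    · obtain ⟨hS, hT, hC⟩ := (mem_filter.mp hW').2
      exact ih W' (ssubset_of_subset_of_ne (disjoint_univ_sdiff_iff_subset.mp hC) hne)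
        (isCutset_compl_of_separates (separates_filter_reachable W v) hS hT hC)

end MarkovRandomField

theorem F_mrf_characterization_general
    {M G : Type*} [CommMonoid M] [AddCommGroup G]
    (A : MAction M G) (F : M → G) (hF : ChainRule A F)
    (n : ℕ) (X : Fin n → M) (Gr : SimpleGraph (Fin n)) :
    IsMRF (Findep A F) Gr X ↔
      ∀ W : Finset (Fin n), W.Nonempty → IsCutset Gr (Finset.univ \ W) →
        A.act (∏ a ∈ Finset.univ \ W, X a) (Fint A F X W) = 0 :=
  ⟨fun hmrf W _ hcut => Fatom_eq_zero_of_isMRF A F X hF hmrf W hcut,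
    fun h => isMRF_of_Fatom_eq_zero A F X hF fun W hcut =>
      h W (nonempty_of_isCutset_compl hcut) hcut⟩

/-- `X₁, …, X_n` form an `F`-Markov random field with respect to the graph
`Gr` on `[n]` if and only if `X_{[n]∖W}.F(;_{w∈W} X_w) = 0` for every nonempty `W ⊆ [n]`
whose atom `p_W` is disconnected with respect to `Gr` (i.e. `[n] ∖ W` is a cutset). -/
theorem F_mrf_characterization
    {M G : Type*} [CommMonoid M] [AddCommGroup G]
    (hidem : ∀ x : M, x * x = x)
    (A : MAction M G) (F : M → G) (hF : ChainRule A F)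
    (n : ℕ) (X : Fin n → M) (Gr : SimpleGraph (Fin n)) :
    IsMRF (Findep A F) Gr X ↔
      ∀ W : Finset (Fin n), W.Nonempty → IsCutset Gr (Finset.univ \ W) →
        A.act (∏ a ∈ Finset.univ \ W, X a) (Fint A F X W) = 0 :=
  F_mrf_characterization_general A F hF n X Gr

end AMRF
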